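/- Assume (LOP) and König's condition (K). Then there is no arbitrage with respect to the ‖·‖-null sets in the class of generalized portfolios: if (V_m,n_m,H_m)_{m≥0} is a generalized portfolio with Σ_m V_m = 0 whose total terminal wealth V_∞ is ≥ 0 outside a ‖·‖-null set, then {S : V_∞(S) > 0} is a ‖·‖-null set. -/

import Mathlib

open Filter
open scoped ENNReal

noncomputable section

/-- A simple portfolio: an initial endowment `V`, a maturity `n`, and
nonanticipating position functions `H i`. -/
structure SimplePortfolio where
  V : ℝ
  n : ℕ
  H : ℕ → (ℕ → ℝ) → ℝ
  nonanticipating : ∀ i, ∀ S S' : ℕ → ℝ, (∀ k, k ≤ i → S k = S' k) → H i S = H i S'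

namespace SimplePortfolio

/-- Wealth process at time `j`. -/
def wealthAt (P : SimplePortfolio) (j : ℕ) (S : ℕ → ℝ) : ℝ :=
  P.V + ∑ i ∈ Finset.range (min j P.n), P.H i S * (S (i + 1) - S i)

/-- Terminal wealth `Π_∞`. -/
def wealth (P : SimplePortfolio) (S : ℕ → ℝ) : ℝ :=
  P.V + ∑ i ∈ Finset.range P.n, P.H i S * (S (i + 1) - S i)

/-- A positive simple portfolio relative to the trajectory set `𝒮`. -/
def Positive (𝒮 : Set (ℕ → ℝ)) (P : SimplePortfolio) : Prop :=
  0 ≤ P.V ∧ ∀ S ∈ 𝒮, 0 ≤ P.wealth S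

end SimplePortfolio

/-- A generalized portfolio: a sequence of simple portfolios, positive for `m ≥ 1`. -/
def IsGenPortfolio (𝒮 : Set (ℕ → ℝ)) (P : ℕ → SimplePortfolio) : Prop :=
  ∀ m, 1 ≤ m → (P m).Positive 𝒮

/-- Total terminal wealth of a generalized portfolio, valued in `(-∞, +∞]`. -/
def totalWealth (P : ℕ → SimplePortfolio) (S : ℕ → ℝ) : EReal :=
  ((P 0).wealth S : EReal) + ((∑' m, ENNReal.ofReal ((P (m + 1)).wealth S) : ℝ≥0∞) : EReal)

/-- Total initial endowment of a generalized portfolio, valued in `(-∞, +∞]`. -/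
def totalEndow (P : ℕ → SimplePortfolio) : EReal :=
  ((P 0).V : EReal) + ((∑' m, ENNReal.ofReal ((P (m + 1)).V) : ℝ≥0∞) : EReal)

/-- The superhedging operator `σ̄` using generalized portfolios. -/
def sigmaBar (𝒮 : Set (ℕ → ℝ)) (f : (ℕ → ℝ) → EReal) : EReal :=
  sInf {c : EReal | ∃ P : ℕ → SimplePortfolio, IsGenPortfolio 𝒮 P ∧
    (∀ S ∈ 𝒮, f S ≤ totalWealth P S) ∧ c = totalEndow P}

/-- The superhedging operator `Ī` using positive generalized portfolios. -/
def IBar (𝒮 : Set (ℕ → ℝ)) (f : (ℕ → ℝ) → EReal) : EReal :=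
  sInf {c : EReal | ∃ P : ℕ → SimplePortfolio, (∀ m, (P m).Positive 𝒮) ∧
    (∀ S ∈ 𝒮, f S ≤ ((∑' m, ENNReal.ofReal ((P m).wealth S) : ℝ≥0∞) : EReal)) ∧
    c = ((∑' m, ENNReal.ofReal ((P m).V) : ℝ≥0∞) : EReal)}

/-- The trajectory-wise Law of One Price (LOP). -/
def LOP (𝒮 : Set (ℕ → ℝ)) : Prop :=
  ∀ P Q : SimplePortfolio, (∀ S ∈ 𝒮, P.wealth S = Q.wealth S) → P.V = Q.V

/-- Positivity of the elementary hedging functional `I`: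
any simple portfolio whose terminal wealth is nonnegative on `𝒮` (i.e. an element of `E⁺`)
has nonnegative initial endowment (price). -/
def IPos (𝒮 : Set (ℕ → ℝ)) : Prop :=
  ∀ P : SimplePortfolio, (∀ S ∈ 𝒮, 0 ≤ P.wealth S) → 0 ≤ P.V

/-- Leinert's condition (L): `σ̄(0) ≥ 0`. -/
def LeinertCond (𝒮 : Set (ℕ → ℝ)) : Prop := 0 ≤ sigmaBar 𝒮 (fun _ => 0)

/-- König's condition (K): `I(f) + Ī(f⁻) ≤ Ī(f⁺)` for all `f ∈ E`. -/
def KoenigCond (𝒮 : Set (ℕ → ℝ)) : Prop :=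
  ∀ P : SimplePortfolio,
    (P.V : EReal) + IBar 𝒮 (fun S => ((max (-(P.wealth S)) 0 : ℝ) : EReal))
      ≤ IBar 𝒮 (fun S => ((max (P.wealth S) 0 : ℝ) : EReal))

/-- The seminorm `‖f‖ = Ī(|f|)`. -/
def pnorm (𝒮 : Set (ℕ → ℝ)) (f : (ℕ → ℝ) → ℝ) : EReal :=
  IBar 𝒮 (fun S => ((|f S| : ℝ) : EReal))

/-- Null sets with respect to the seminorm `‖·‖`. -/
def NullSet (𝒮 : Set (ℕ → ℝ)) (A : Set (ℕ → ℝ)) : Prop :=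
  IBar 𝒮 (A.indicator fun _ => (1 : EReal)) = 0

/-- The shifted conditional space `𝒮^{(S,j)}`. -/
def shiftedSpace (𝒮 : Set (ℕ → ℝ)) (S : ℕ → ℝ) (j : ℕ) : Set (ℕ → ℝ) :=
  {T | ∃ S' ∈ 𝒮, (∀ i, i ≤ j → S' i = S i) ∧ ∀ i, T i = S' (j + i)}

/-- Leinert's condition at every node (nL). -/
def NodewiseL (𝒮 : Set (ℕ → ℝ)) : Prop :=
  ∀ S ∈ 𝒮, ∀ j : ℕ, LeinertCond (shiftedSpace 𝒮 S j)

/-- König's condition (together with (LOP)) at every node (nK). -/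
def NodewiseK (𝒮 : Set (ℕ → ℝ)) : Prop :=
  ∀ S ∈ 𝒮, ∀ j : ℕ, LOP (shiftedSpace 𝒮 S j) ∧ KoenigCond (shiftedSpace 𝒮 S j)

/-- `S'` agrees with `S` up to time `j`. -/
def agreesUpTo (S S' : ℕ → ℝ) (j : ℕ) : Prop := ∀ i, i ≤ j → S' i = S i

/-- The node `𝒮_{(S,j)}` is flat. -/
def FlatNode (𝒮 : Set (ℕ → ℝ)) (S : ℕ → ℝ) (j : ℕ) : Prop :=
  ∀ S' ∈ 𝒮, agreesUpTo S S' j → S' (j + 1) = S j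

/-- The node `𝒮_{(S,j)}` is an arbitrage node. -/
def ArbNode (𝒮 : Set (ℕ → ℝ)) (S : ℕ → ℝ) (j : ℕ) : Prop :=
  ∃ ε : ℝ, (ε = 1 ∨ ε = -1) ∧
    (∀ S' ∈ 𝒮, agreesUpTo S S' j → 0 ≤ ε * (S' (j + 1) - S j)) ∧
    ∃ S' ∈ 𝒮, agreesUpTo S S' j ∧ 0 < ε * (S' (j + 1) - S j)

/-- Arbitrage node of type I. -/
def TypeINode (𝒮 : Set (ℕ → ℝ)) (S : ℕ → ℝ) (j : ℕ) : Prop :=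
  ArbNode 𝒮 S j ∧ ∃ S' ∈ 𝒮, agreesUpTo S S' j ∧ S' (j + 1) = S j

/-- Arbitrage node of type II. -/
def TypeIINode (𝒮 : Set (ℕ → ℝ)) (S : ℕ → ℝ) (j : ℕ) : Prop :=
  ArbNode 𝒮 S j ∧ ¬ ∃ S' ∈ 𝒮, agreesUpTo S S' j ∧ S' (j + 1) = S j

/-- Up-down node: neither flat nor an arbitrage node. -/
def UpDownNode (𝒮 : Set (ℕ → ℝ)) (S : ℕ → ℝ) (j : ℕ) : Prop :=
  ¬ FlatNode 𝒮 S j ∧ ¬ ArbNode 𝒮 S j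

/-- The set `N` of trajectories moving at a type I arbitrage node. -/
def NSet (𝒮 : Set (ℕ → ℝ)) : Set (ℕ → ℝ) :=
  {S | S ∈ 𝒮 ∧ ∃ j : ℕ, TypeINode 𝒮 S j ∧ S (j + 1) ≠ S j}

/-- The set `N_n` of trajectories moving at a type I arbitrage node before time `n`. -/
def NSetUpTo (𝒮 : Set (ℕ → ℝ)) (n : ℕ) : Set (ℕ → ℝ) :=
  {S | S ∈ 𝒮 ∧ ∃ j < n, TypeINode 𝒮 S j ∧ S (j + 1) ≠ S j}

/-- Membership in `L¹_(L)`: `f` has finite norm and is a `‖·‖`-limit of elements of `E'`. -/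
def MemL1L (𝒮 : Set (ℕ → ℝ)) (f : (ℕ → ℝ) → ℝ) : Prop :=
  pnorm 𝒮 f < ⊤ ∧
  ∃ P : ℕ → SimplePortfolio, (∀ m, pnorm 𝒮 ((P m).wealth) < ⊤) ∧
    Tendsto (fun m => pnorm 𝒮 (fun S => f S - (P m).wealth S)) atTop (nhds 0)

/-- Membership in `L¹_(K)`: the outer and inner integrals agree and are finite. -/
def MemL1K (𝒮 : Set (ℕ → ℝ)) (f : (ℕ → ℝ) → ℝ) : Prop :=
  ∃ c : ℝ, sigmaBar 𝒮 (fun S => ((f S : ℝ) : EReal)) = (c : EReal) ∧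
    sigmaBar 𝒮 (fun S => ((-f S : ℝ) : EReal)) = ((-c : ℝ) : EReal)

/-- `f` has finite maturity: it depends only on an initial segment of the trajectory. -/
def FiniteMaturity (𝒮 : Set (ℕ → ℝ)) (f : (ℕ → ℝ) → ℝ) : Prop :=
  ∃ n : ℕ, ∀ S ∈ 𝒮, ∀ S' ∈ 𝒮, (∀ i, i ≤ n → S i = S' i) → f S = f S'

/-!
A set on which some `g ≥ 0` with `Ī(g) = 0` is positive is null, since `Ī` is countably
subadditive; so it suffices to show `Ī(V_∞⁺) = 0`. Cutting the generalized portfolio after `M` steps,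
`Q = Σ_{m ≤ M} P_m` is a simple portfolio with `Q.V = -τ_M`, `τ_M = Σ_{m > M} V_m`, and
`V_∞ = Π^Q + Σ_{m > M} Π^{(m)}`. Off the null set `{V_∞ < 0}` the negative part of `Π^Q` is
dominated by the tail wealth, so `Ī((Π^Q)⁻) ≤ τ_M`, and (K) applied to `-Q` forces `Ī((Π^Q)⁺) = 0`.
Hence `Ī(V_∞⁺) ≤ τ_M`, which tends to `0`.
-/

namespace SimplePortfolio

instance : Zero SimplePortfolio :=
  ⟨{ V := 0, n := 0, H := fun _ _ => 0, nonanticipating := fun _ _ _ _ => rfl }⟩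

@[simp]
lemma V_zero : (0 : SimplePortfolio).V = 0 := rfl

@[simp]
lemma wealth_zero (S : ℕ → ℝ) : (0 : SimplePortfolio).wealth S = 0 := by
  simp only [wealth, V_zero, zero_add]
  rfl

lemma positive_zero (𝒮 : Set (ℕ → ℝ)) : (0 : SimplePortfolio).Positive 𝒮 :=
  ⟨le_rfl, fun S _ => (wealth_zero S).ge⟩

def neg (A : SimplePortfolio) : SimplePortfolio where
  V := -A.V
  n := A.n
  H i S := -A.H i S
  nonanticipating i S S' h := by rw [A.nonanticipating i S S' h]

@[simp]
lemma wealth_neg (A : SimplePortfolio) (S : ℕ → ℝ) : A.neg.wealth S = -A.wealth S := by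
  simp only [wealth, neg, neg_mul, Finset.sum_neg_distrib, neg_add]

/-- Positions are switched off after each portfolio's own maturity, so that the common maturity
can be taken to be the largest one. -/
def sumRange (P : ℕ → SimplePortfolio) (N : ℕ) : SimplePortfolio where
  V := ∑ m ∈ Finset.range N, (P m).V
  n := (Finset.range N).sup fun m => (P m).n
  H i S := ∑ m ∈ Finset.range N, if i < (P m).n then (P m).H i S else 0
  nonanticipating i S S' h := by
    refine Finset.sum_congr rfl fun m _ => ?_
    rw [(P m).nonanticipating i S S' h]

lemma wealth_sumRange (P : ℕ → SimplePortfolio) (N : ℕ) (S : ℕ → ℝ) :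
    (sumRange P N).wealth S = ∑ m ∈ Finset.range N, (P m).wealth S := by
  simp only [wealth, sumRange, Finset.sum_mul, Finset.sum_add_distrib, ite_mul, zero_mul]
  rw [Finset.sum_comm]
  congr 1
  refine Finset.sum_congr rfl fun m hm => ?_
  have hle : (P m).n ≤ (Finset.range N).sup fun m => (P m).n :=
    Finset.le_sup (f := fun m => (P m).n) hm
  rw [← Finset.sum_filter]
  congr 1
  ext i
  simp only [Finset.mem_filter, Finset.mem_range]
  omega

end SimplePortfolio

open SimplePortfolio

section Superhedging

variable {𝒮 : Set (ℕ → ℝ)}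

def wealthSum (P : ℕ → SimplePortfolio) (S : ℕ → ℝ) : ℝ≥0∞ :=
  ∑' m, ENNReal.ofReal ((P m).wealth S)

def endowSum (P : ℕ → SimplePortfolio) : ℝ≥0∞ :=
  ∑' m, ENNReal.ofReal (P m).V

variable (𝒮) in
def superhedge (g : (ℕ → ℝ) → ℝ≥0∞) : ℝ≥0∞ :=
  sInf {c | ∃ P : ℕ → SimplePortfolio, (∀ m, (P m).Positive 𝒮) ∧
    (∀ S ∈ 𝒮, g S ≤ wealthSum P S) ∧ c = endowSum P}

lemma IBar_coe_eq_superhedge (g : (ℕ → ℝ) → ℝ≥0∞) :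
    IBar 𝒮 (fun S => (g S : EReal)) = superhedge 𝒮 g := by
  rw [superhedge, Monotone.map_sInf_of_continuousAt continuous_coe_ennreal_ereal.continuousAt
    (fun _ _ => EReal.coe_ennreal_le_coe_ennreal_iff.mpr) EReal.coe_ennreal_top, IBar]
  congr 1
  ext c
  simp only [Set.mem_image, Set.mem_ofPred_eq, EReal.coe_ennreal_le_coe_ennreal_iff]
  constructor
  · rintro ⟨P, hP, hg, rfl⟩
    exact ⟨_, ⟨P, hP, hg, rfl⟩, rfl⟩
  · rintro ⟨_, ⟨P, hP, hg, rfl⟩, rfl⟩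
    exact ⟨P, hP, hg, rfl⟩

lemma IBar_max_zero_eq_superhedge (f : (ℕ → ℝ) → ℝ) :
    IBar 𝒮 (fun S => ((max (f S) 0 : ℝ) : EReal)) =
      superhedge 𝒮 (fun S => ENNReal.ofReal (f S)) := by
  simp_rw [← EReal.coe_ennreal_ofReal]
  exact IBar_coe_eq_superhedge _

lemma superhedge_le {P : ℕ → SimplePortfolio} {g : (ℕ → ℝ) → ℝ≥0∞}
    (hP : ∀ m, (P m).Positive 𝒮) (hg : ∀ S ∈ 𝒮, g S ≤ wealthSum P S) :
    superhedge 𝒮 g ≤ endowSum P :=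
  sInf_le ⟨P, hP, hg, rfl⟩

lemma superhedge_mono {f g : (ℕ → ℝ) → ℝ≥0∞} (h : ∀ S ∈ 𝒮, f S ≤ g S) :
    superhedge 𝒮 f ≤ superhedge 𝒮 g :=
  le_sInf <| by
    rintro _ ⟨P, hP, hg, rfl⟩
    exact superhedge_le hP fun S hS => (h S hS).trans (hg S hS)

lemma exists_lt_of_superhedge_lt {g : (ℕ → ℝ) → ℝ≥0∞} {c : ℝ≥0∞} (h : superhedge 𝒮 g < c) :
    ∃ P : ℕ → SimplePortfolio, (∀ m, (P m).Positive 𝒮) ∧ (∀ S ∈ 𝒮, g S ≤ wealthSum P S) ∧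
      endowSum P < c := by
  obtain ⟨_, ⟨P, hP, hg, rfl⟩, hc⟩ := sInf_lt_iff.mp h
  exact ⟨P, hP, hg, hc⟩

end Superhedging

section Subadditivity

variable {𝒮 : Set (ℕ → ℝ)}

def flattenSeq (C : ℕ → ℕ → SimplePortfolio) (n : ℕ) : SimplePortfolio :=
  C (Nat.unpair n).1 (Nat.unpair n).2

lemma tsum_flattenSeq (C : ℕ → ℕ → SimplePortfolio) (F : SimplePortfolio → ℝ≥0∞) :
    ∑' n, F (flattenSeq C n) = ∑' k, ∑' j, F (C k j) := by
  rw [← ENNReal.tsum_prod]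
  exact Nat.pairEquiv.symm.tsum_eq fun p : ℕ × ℕ => F (C p.1 p.2)

lemma superhedge_tsum_le (f : ℕ → (ℕ → ℝ) → ℝ≥0∞) :
    superhedge 𝒮 (fun S => ∑' k, f k S) ≤ ∑' k, superhedge 𝒮 (f k) := by
  refine ENNReal.le_of_forall_pos_le_add fun ε hε hfin => ?_
  obtain ⟨δ, hδ, hδsum⟩ := ENNReal.exists_pos_sum_of_countable' (ENNReal.coe_ne_zero.mpr hε.ne') ℕ
  have hlt : ∀ k, superhedge 𝒮 (f k) < superhedge 𝒮 (f k) + δ k := fun k =>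
    ENNReal.lt_add_right (ENNReal.ne_top_of_tsum_ne_top hfin.ne k) (hδ k).ne'
  choose C hCpos hCcover hCcost using fun k => exists_lt_of_superhedge_lt (hlt k)
  calc superhedge 𝒮 (fun S => ∑' k, f k S)
      ≤ endowSum (flattenSeq C) := superhedge_le (fun n => hCpos _ _) fun S hS => by
        rw [wealthSum, tsum_flattenSeq C fun A => ENNReal.ofReal (A.wealth S)]
        exact ENNReal.tsum_le_tsum fun k => hCcover k S hS
    _ = ∑' k, endowSum (C k) := tsum_flattenSeq C fun A => ENNReal.ofReal A.V
    _ ≤ ∑' k, (superhedge 𝒮 (f k) + δ k) := ENNReal.tsum_le_tsum fun k => (hCcost k).le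
    _ ≤ ∑' k, superhedge 𝒮 (f k) + ε := by
      rw [ENNReal.tsum_add]
      gcongr

lemma superhedge_zero : superhedge 𝒮 0 = 0 :=
  nonpos_iff_eq_zero.mp <| (superhedge_le (P := fun _ => 0) (fun _ => positive_zero 𝒮)
    fun _ _ => zero_le).trans_eq (by simp [endowSum])

lemma superhedge_add_le (f g : (ℕ → ℝ) → ℝ≥0∞) :
    superhedge 𝒮 (f + g) ≤ superhedge 𝒮 f + superhedge 𝒮 g := by
  let h : ℕ → (ℕ → ℝ) → ℝ≥0∞ := fun k => if k = 0 then f else if k = 1 then g else 0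
  have hsum (u : ((ℕ → ℝ) → ℝ≥0∞) → ℝ≥0∞)
      (hu : u 0 = 0) : ∑' k, u (h k) = u f + u g := by
    rw [tsum_eq_sum (s := Finset.range 2) fun k hk => by
      simp only [Finset.mem_range, not_lt] at hk
      simp [h, show k ≠ 0 by omega, show k ≠ 1 by omega, hu]]
    simp [Finset.sum_range_succ, h]
  calc superhedge 𝒮 (f + g) = superhedge 𝒮 (fun S => ∑' k, h k S) := by
        congr 1; ext S; exact (hsum (fun φ => φ S) rfl).symm
    _ ≤ ∑' k, superhedge 𝒮 (h k) := superhedge_tsum_le h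
    _ = superhedge 𝒮 f + superhedge 𝒮 g := hsum (superhedge 𝒮) superhedge_zero

end Subadditivity

section NullSets

variable {𝒮 : Set (ℕ → ℝ)}

lemma superhedge_top_mul_eq_zero {g : (ℕ → ℝ) → ℝ≥0∞} (hg : superhedge 𝒮 g = 0) :
    superhedge 𝒮 (fun S => ⊤ * g S) = 0 := by
  have htsum (c : ℝ≥0∞) : ∑' _ : ℕ, c = ⊤ * c := by
    rw [ENNReal.tsum_const, ENat.card_eq_top_of_infinite, ENat.toENNReal_top]
  simp_rw [← htsum]
  exact nonpos_iff_eq_zero.mp <| (superhedge_tsum_le fun _ => g).trans (by simp [hg])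

lemma nullSet_iff_superhedge {A : Set (ℕ → ℝ)} :
    NullSet 𝒮 A ↔ superhedge 𝒮 (A.indicator 1) = 0 := by
  have : (A.indicator fun _ => (1 : EReal)) = fun S => ((A.indicator 1 S : ℝ≥0∞) : EReal) := by
    ext S
    by_cases hS : S ∈ A <;> simp [hS]
  rw [NullSet, this, IBar_coe_eq_superhedge, EReal.coe_ennreal_eq_zero]

lemma NullSet.superhedge_indicator_top {A : Set (ℕ → ℝ)} (hA : NullSet 𝒮 A) :
    superhedge 𝒮 (A.indicator ⊤) = 0 := by
  convert superhedge_top_mul_eq_zero (nullSet_iff_superhedge.mp hA) using 2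
  ext S
  by_cases hS : S ∈ A <;> simp [hS]

lemma nullSet_of_superhedge_eq_zero {g : (ℕ → ℝ) → ℝ≥0∞} (hg : superhedge 𝒮 g = 0)
    {A : Set (ℕ → ℝ)} (hA : ∀ S ∈ 𝒮, S ∈ A → 0 < g S) : NullSet 𝒮 A := by
  refine nullSet_iff_superhedge.mpr <| nonpos_iff_eq_zero.mp <|
    (superhedge_mono fun S hS => ?_).trans (superhedge_top_mul_eq_zero hg).le
  by_cases hSA : S ∈ A
  · simp [hSA, ENNReal.top_mul (hA S hS hSA).ne']
  · simp [hSA]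

end NullSets

lemma KoenigCond.superhedge_posPart_eq_zero {𝒮 : Set (ℕ → ℝ)} (hK : KoenigCond 𝒮)
    {Q : SimplePortfolio} {τ : ℝ≥0∞} (hQ : (Q.V : EReal) + τ = 0)
    (hneg : superhedge 𝒮 (fun S => ENNReal.ofReal (-Q.wealth S)) ≤ τ) :
    superhedge 𝒮 (fun S => ENNReal.ofReal (Q.wealth S)) = 0 := by
  have hτ : τ ≠ ⊤ := by
    rintro rfl
    simp at hQ
  have hτV : ((Q.neg.V : ℝ) : EReal) = τ := by
    rw [← EReal.coe_ennreal_toReal hτ, ← EReal.coe_add] at hQ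
    rw [← EReal.coe_ennreal_toReal hτ, EReal.coe_eq_coe_iff]
    have : Q.V + τ.toReal = 0 := by exact_mod_cast hQ
    simp only [neg]
    linarith
  have hK' := hK Q.neg
  simp only [wealth_neg, neg_neg, IBar_max_zero_eq_superhedge, hτV,
    ← EReal.coe_ennreal_add, EReal.coe_ennreal_le_coe_ennreal_iff] at hK'
  exact nonpos_iff_eq_zero.mp <| ENNReal.le_of_add_le_add_left hτ <| by
    simpa using hK'.trans hneg

lemma ENNReal.ofReal_neg_le_of_nonneg_coe_add {q : ℝ} {w : ℝ≥0∞} (h : 0 ≤ (q : EReal) + w) :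
    ENNReal.ofReal (-q) ≤ w := by
  induction w using ENNReal.recTopCoe with
  | top => exact le_top
  | coe r =>
    rw [EReal.coe_nnreal_eq_coe_real, ← EReal.coe_add, EReal.coe_nonneg] at h
    rw [ENNReal.ofReal_le_iff_le_toReal ENNReal.coe_ne_top, ENNReal.coe_toReal]
    linarith

lemma EReal.toENNReal_coe_add_le (q : ℝ) (w : ℝ≥0∞) :
    ((q : EReal) + w).toENNReal ≤ ENNReal.ofReal q + w :=
  EReal.toENNReal_add_le.trans_eq (by rw [EReal.real_coe_toENNReal, EReal.toENNReal_coe])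

lemma EReal.coe_add_tsum_ofReal_eq_sum_range_add_tail {a : ℕ → ℝ} (ha : ∀ m, 0 ≤ a (m + 1))
    (M : ℕ) :
    (a 0 : EReal) + ((∑' m, ENNReal.ofReal (a (m + 1)) : ℝ≥0∞) : EReal) =
      ((∑ m ∈ Finset.range (M + 1), a m : ℝ) : EReal) +
        ((∑' m, ENNReal.ofReal (a (m + M + 1)) : ℝ≥0∞) : EReal) := by
  rw [← ENNReal.summable.sum_add_tsum_nat_add' (k := M),
    ← ENNReal.ofReal_sum_of_nonneg fun m _ => ha m, EReal.coe_ennreal_add,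
    EReal.coe_ennreal_ofReal, max_eq_left (Finset.sum_nonneg fun m _ => ha m), ← add_assoc,
    ← EReal.coe_add, Finset.sum_range_succ' _ M, add_comm (a 0)]

section Arbitrage

variable {𝒮 : Set (ℕ → ℝ)} {P : ℕ → SimplePortfolio}

lemma IsGenPortfolio.positive_succ (hP : IsGenPortfolio 𝒮 P) (m : ℕ) : (P (m + 1)).Positive 𝒮 :=
  hP (m + 1) (Nat.le_add_left 1 m)

lemma totalEndow_eq_sumRange_add_tail (hP : IsGenPortfolio 𝒮 P) (M : ℕ) :
    totalEndow P = ((sumRange P (M + 1)).V : EReal) + endowSum fun m => P (m + M + 1) :=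
  EReal.coe_add_tsum_ofReal_eq_sum_range_add_tail (a := fun m => (P m).V)
    (fun m => (hP.positive_succ m).1) M

lemma totalWealth_eq_sumRange_add_tail (hP : IsGenPortfolio 𝒮 P) (M : ℕ) {S : ℕ → ℝ}
    (hS : S ∈ 𝒮) :
    totalWealth P S =
      ((sumRange P (M + 1)).wealth S : EReal) + wealthSum (fun m => P (m + M + 1)) S := by
  rw [wealth_sumRange]
  exact EReal.coe_add_tsum_ofReal_eq_sum_range_add_tail (a := fun m => (P m).wealth S)
    (fun m => (hP.positive_succ m).2 S hS) M

lemma superhedge_posPart_totalWealth_le_tail (hK : KoenigCond 𝒮) (hP : IsGenPortfolio 𝒮 P)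
    (hzero : totalEndow P = 0) (hneg : NullSet 𝒮 {S | S ∈ 𝒮 ∧ totalWealth P S < 0}) (M : ℕ) :
    superhedge 𝒮 (fun S => (totalWealth P S).toENNReal) ≤
      endowSum fun m => P (m + M + 1) := by
  set Q := sumRange P (M + 1)
  set T : ℕ → SimplePortfolio := fun m => P (m + M + 1)
  have hT : superhedge 𝒮 (wealthSum T) ≤ endowSum T :=
    superhedge_le (fun m => hP.positive_succ (m + M)) fun _ _ => le_rfl
  have hQneg : superhedge 𝒮 (fun S => ENNReal.ofReal (-Q.wealth S)) ≤ endowSum T :=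
    calc superhedge 𝒮 (fun S => ENNReal.ofReal (-Q.wealth S))
        ≤ superhedge 𝒮 (wealthSum T + {S | S ∈ 𝒮 ∧ totalWealth P S < 0}.indicator ⊤) :=
          superhedge_mono fun S hS => by
            by_cases hSneg : totalWealth P S < 0
            · simp [hS, hSneg]
            · rw [totalWealth_eq_sumRange_add_tail hP M hS] at hSneg
              exact (ENNReal.ofReal_neg_le_of_nonneg_coe_add (not_lt.mp hSneg)).trans le_self_add
      _ ≤ superhedge 𝒮 (wealthSum T) + 0 :=
          (superhedge_add_le _ _).trans_eq (by rw [hneg.superhedge_indicator_top])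
      _ ≤ endowSum T := by rwa [add_zero]
  have hQpos := hK.superhedge_posPart_eq_zero
    (by rw [← hzero, totalEndow_eq_sumRange_add_tail hP M]) hQneg
  calc superhedge 𝒮 (fun S => (totalWealth P S).toENNReal)
      ≤ superhedge 𝒮 ((fun S => ENNReal.ofReal (Q.wealth S)) + wealthSum T) :=
        superhedge_mono fun S hS => by
          rw [totalWealth_eq_sumRange_add_tail hP M hS]
          exact EReal.toENNReal_coe_add_le _ _
    _ ≤ 0 + superhedge 𝒮 (wealthSum T) := (superhedge_add_le _ _).trans_eq (by rw [hQpos])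
    _ ≤ endowSum T := by rwa [zero_add]

end Arbitrage

theorem stmt9_general (𝒮 : Set (ℕ → ℝ)) (hK : KoenigCond 𝒮)
    (P : ℕ → SimplePortfolio) (hP : IsGenPortfolio 𝒮 P)
    (hzero : totalEndow P = 0)
    (hneg : NullSet 𝒮 {S | S ∈ 𝒮 ∧ totalWealth P S < 0}) :
    NullSet 𝒮 {S | S ∈ 𝒮 ∧ 0 < totalWealth P S} := by
  have hfinite : ∑' m, ENNReal.ofReal (P (m + 1)).V ≠ ⊤ := by
    intro htop
    simp [totalEndow, htop] at hzero
  have htail := ENNReal.tendsto_sum_nat_add (fun m => ENNReal.ofReal (P (m + 1)).V) hfinite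
  have hpos : superhedge 𝒮 (fun S => (totalWealth P S).toENNReal) = 0 :=
    nonpos_iff_eq_zero.mp <| ge_of_tendsto' htail
      (superhedge_posPart_totalWealth_le_tail hK hP hzero hneg)
  exact nullSet_of_superhedge_eq_zero hpos fun S _ hS => EReal.toENNReal_pos_iff.mpr hS.2

/-- under (LOP) and (K), there is no arbitrage with respect to the
`‖·‖`-null sets in the class of generalized portfolios. -/
theorem stmt9 (𝒮 : Set (ℕ → ℝ)) (hlop : LOP 𝒮) (hK : KoenigCond 𝒮)
    (P : ℕ → SimplePortfolio) (hP : IsGenPortfolio 𝒮 P)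
    (hzero : totalEndow P = 0)
    (hneg : NullSet 𝒮 {S | S ∈ 𝒮 ∧ totalWealth P S < 0}) :
    NullSet 𝒮 {S | S ∈ 𝒮 ∧ 0 < totalWealth P S} :=
  stmt9_general 𝒮 hK P hP hzero hneg
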